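/- arXiv:1911.01755 — 8 statements merged into one kernel-verified Lean document; each statement's English description precedes it below -/
import Mathlib

section
/- Let R be a (possibly noncommutative) ring and I a two-sided ideal of R. If for all a, b ∈ R the containment ⟨a⟩ ∩ ⟨b⟩ ⊆ I (where ⟨x⟩ denotes the two-sided ideal generated by x) implies a ∈ I or b ∈ I, then I is strongly irreducible, i.e., for all two-sided ideals A, B of R, A ∩ B ⊆ I implies A ⊆ I or B ⊆ I. -/
/-- If containment of intersections of principal two-sided ideals in `I`
forces one generator into `I`, then `I` is strongly irreducible. -/
theorem stmt_1 {R : Type*} [Ring R] (I : TwoSidedIdeal R)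
    (h : ∀ a b : R,
      TwoSidedIdeal.span {a} ⊓ TwoSidedIdeal.span {b} ≤ I → a ∈ I ∨ b ∈ I) :
    ∀ A B : TwoSidedIdeal R, A ⊓ B ≤ I → A ≤ I ∨ B ≤ I := by
  intro A B hAB
  by_contra hc
  push_neg at hc
  obtain ⟨hA, hB⟩ := hc
  obtain ⟨a, haA, haI⟩ := SetLike.not_le_iff_exists.mp hA
  obtain ⟨b, hbB, hbI⟩ := SetLike.not_le_iff_exists.mp hB
  have hsA : TwoSidedIdeal.span {a} ≤ A := fun x hx =>
    TwoSidedIdeal.mem_span_iff.mp hx A (by simpa using haA)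
  have hsB : TwoSidedIdeal.span {b} ≤ B := fun x hx =>
    TwoSidedIdeal.mem_span_iff.mp hx B (by simpa using hbB)
  rcases h a b (le_trans (inf_le_inf hsA hsB) hAB) with h' | h'
  · exact haI h'
  · exact hbI h'
end

section
/- Let R be a principal ideal domain with the property that for every nonzero a ∈ R there exists a prime element p ∈ R with p ∤ a. Then for every proper ideal I of R there exists a sequence (A_m)_{m∈ℕ} of ideals of R such that ⋂_{m∈ℕ} A_m ⊆ I and A_m ⊄ I for every m; in particular, no proper ideal of R is strongly prime. -/
/-- In a principal ideal domain in which every nonzero element fails to be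
divisible by some prime element, no proper ideal is strongly prime: every
proper ideal `I` admits a sequence of ideals whose intersection lies in `I`
while no member of the sequence does. -/
theorem stmt_3 {R : Type*} [CommRing R] [IsDomain R] [IsPrincipalIdealRing R]
    (hp : ∀ a : R, a ≠ 0 → ∃ p : R, Prime p ∧ ¬ p ∣ a)
    (I : Ideal R) (hI : I ≠ ⊤) :
    ∃ A : ℕ → Ideal R, (⨅ m, A m) ≤ I ∧ ∀ m, ¬ A m ≤ I := by
  obtain ⟨a, ha⟩ := (IsPrincipalIdealRing.principal I).principal
  -- choose a prime p with a ∣ p^m impossible for all m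
  obtain ⟨p, hp', hpa⟩ : ∃ p : R, Prime p ∧ ∀ m : ℕ, ¬ a ∣ p ^ m := by
    by_cases h0 : a = 0
    · obtain ⟨p, hp', -⟩ := hp 1 one_ne_zero
      exact ⟨p, hp', fun m hd => pow_ne_zero m hp'.ne_zero (by simpa [h0] using hd)⟩
    · obtain ⟨p, hp', hnd⟩ := hp a h0
      refine ⟨p, hp', fun m hd => ?_⟩
      -- a ∣ p^m, a not a unit (I ≠ ⊤), so p ∣ a
      have hua : ¬ IsUnit a := by
        intro hu
        exact hI (by rw [ha]; exact Ideal.span_singleton_eq_top.mpr hu)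
      obtain ⟨i, hi, hassoc⟩ := (dvd_prime_pow hp' m).mp hd
      cases i with
      | zero => exact hua (isUnit_of_dvd_unit hassoc.dvd (by simp))
      | succ k => exact hnd ((dvd_pow_self p (Nat.succ_ne_zero k)).trans hassoc.symm.dvd)
  refine ⟨fun m => Ideal.span {p} ^ m, ?_, ?_⟩
  · have hnt : Ideal.span {p} ≠ ⊤ := by
      simpa [Ideal.span_singleton_eq_top] using hp'.not_unit
    have := Ideal.iInf_pow_eq_bot_of_isDomain (Ideal.span {p}) hnt
    rw [this]
    exact bot_le
  · intro m hle
    have hmem : p ^ m ∈ Ideal.span {p} ^ m := by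
      rw [Ideal.span_singleton_pow]
      exact Ideal.subset_span rfl
    have : p ^ m ∈ I := hle hmem
    rw [ha] at this
    exact hpa m (Ideal.mem_span_singleton.mp this)
end

section
/- Let K be a field. Then for every proper ideal I of the Laurent polynomial ring K[T,T⁻¹] there exists a sequence (A_m)_{m∈ℕ} of ideals of K[T,T⁻¹] such that ⋂_{m∈ℕ} A_m ⊆ I and A_m ⊄ I for every m; in particular, no proper ideal of K[T,T⁻¹] is strongly prime. -/
open Polynomial LaurentPolynomial

/-! A proper ideal `I` lies in a maximal ideal `M`. The ring `K[T,T⁻¹]` is not local, since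
`T(1 + T) + (1 - T - T²) = 1` writes `1` as a sum of two non-units; so some non-unit `p` lies
outside `M`. By Krull's intersection theorem in the Noetherian domain `K[T,T⁻¹]` the powers of
`(p)` intersect in `0 ⊆ I`, while `p ^ m ∉ M ⊇ I` for every `m`. -/

theorem Ideal.IsMaximal.exists_not_isUnit_notMem_of_not_isLocalRing {R : Type*} [CommRing R]
    [Nontrivial R] (h : ¬IsLocalRing R) {M : Ideal R} (hM : M.IsMaximal) :
    ∃ p ∉ M, ¬IsUnit p := by
  by_contra! hunits
  have hnonunits : ∀ a ∈ nonunits R, a ∈ M := fun a ha => by_contra fun haM => ha (hunits a haM)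
  refine h (IsLocalRing.of_nonunits_add fun a b ha hb hab => ?_)
  exact hM.ne_top (M.eq_top_of_isUnit_mem (M.add_mem (hnonunits a ha) (hnonunits b hb)) hab)

theorem Ideal.exists_iInf_le_and_forall_not_le_of_not_isLocalRing {R : Type*} [CommRing R]
    [IsDomain R] [IsNoetherianRing R] (h : ¬IsLocalRing R) {I : Ideal R} (hI : I ≠ ⊤) :
    ∃ A : ℕ → Ideal R, (⨅ m, A m) ≤ I ∧ ∀ m, ¬A m ≤ I := by
  obtain ⟨M, hM, hIM⟩ := I.exists_le_maximal hI
  obtain ⟨p, hpM, hp⟩ := hM.exists_not_isUnit_notMem_of_not_isLocalRing h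
  refine ⟨fun m => span {p} ^ m, ?_, fun m hle => ?_⟩
  · rw [iInf_pow_eq_bot_of_isDomain _ (mt span_singleton_eq_top.mp hp)]
    exact bot_le
  · exact hpM (hM.isPrime.mem_of_pow_mem m (hIM (hle (pow_mem_pow (mem_span_singleton_self p) m))))

namespace LaurentPolynomial

instance {R : Type*} [CommRing R] [IsNoetherianRing R] : IsNoetherianRing R[T;T⁻¹] :=
  IsLocalization.isNoetherianRing (.powers (X : R[X])) _ inferInstance

theorem dvd_X_pow_of_isUnit_toLaurent {R : Type*} [CommRing R] {q : R[X]}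
    (hq : IsUnit (toLaurent q)) : ∃ n : ℕ, q ∣ X ^ n := by
  obtain ⟨u, hu⟩ := hq
  obtain ⟨n, f, hf⟩ := exists_T_pow (↑u⁻¹ : R[T;T⁻¹])
  refine ⟨n, f, toLaurent_injective ?_⟩
  rw [map_mul, hf, toLaurent_X_pow, ← hu, ← mul_assoc, u.mul_inv, one_mul]

variable {R : Type*} [CommRing R] [IsDomain R]

theorem not_isUnit_toLaurent {q : R[X]} (hq : ¬IsUnit q) (h0 : q.coeff 0 ≠ 0) :
    ¬IsUnit (toLaurent q) := by
  intro hu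
  obtain ⟨n, hn⟩ := dvd_X_pow_of_isUnit_toLaurent hu
  obtain ⟨_ | i, -, hi⟩ := (dvd_prime_pow prime_X n).mp hn
  · exact hq (associated_one_iff_isUnit.mp hi)
  · exact h0 (X_dvd_iff.mp ((dvd_pow_self X i.succ_ne_zero).trans hi.symm.dvd))

theorem not_isLocalRing : ¬IsLocalRing R[T;T⁻¹] := by
  have hdeg₁ : (1 + X : R[X]).natDegree = 1 := by compute_degree!
  have hdeg₂ : (1 - X - X ^ 2 : R[X]).natDegree = 2 := by compute_degree!
  have ha : ¬IsUnit (toLaurent (X * (1 + X) : R[X])) := by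
    rw [map_mul, IsUnit.mul_iff, toLaurent_X]
    exact fun h => not_isUnit_toLaurent (not_isUnit_of_natDegree_pos _ (by omega))
      (by simp) h.2
  have hb : ¬IsUnit (toLaurent (1 - X - X ^ 2 : R[X])) :=
    not_isUnit_toLaurent (not_isUnit_of_natDegree_pos _ (by omega)) (by simp)
  refine IsLocalRing.not_isLocalRing_def ha hb ?_
  rw [← map_add, ← map_one toLaurent]
  congr 1
  ring

end LaurentPolynomial

/-- No proper ideal of the Laurent polynomial ring `K[T,T⁻¹]` over a field is
strongly prime: every proper ideal `I` admits a sequence of ideals whose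
intersection lies in `I` while no member of the sequence does. -/
theorem stmt_4 {K : Type*} [Field K]
    (I : Ideal (LaurentPolynomial K)) (hI : I ≠ ⊤) :
    ∃ A : ℕ → Ideal (LaurentPolynomial K),
      (⨅ m, A m) ≤ I ∧ ∀ m, ¬ A m ≤ I :=
  Ideal.exists_iInf_le_and_forall_not_le_of_not_isLocalRing LaurentPolynomial.not_isLocalRing hI
end

section
/- Let K be a field and n ≥ 1 an integer. Then for every proper two-sided ideal I of the matrix ring M_n(K[T,T⁻¹]) there exists a sequence (A_m)_{m∈ℕ} of two-sided ideals of M_n(K[T,T⁻¹]) such that ⋂_{m∈ℕ} A_m ⊆ I and A_m ⊄ I for every m; in particular, no proper two-sided ideal of M_n(K[T,T⁻¹]) is strongly prime. -/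
/-!
Two-sided ideals of `Mₙ(R)` correspond to ideals of `R`, so it suffices to treat a proper ideal `J`
of `R = K[T,T⁻¹]`. Pick a nonzero polynomial `g` with `g T⁻ᴺ ∈ J` (any `g`, say `1`, if `J = 0`).
The elements `1 + g T^(m+1)` are `≡ 1` modulo `J`, so the principal ideals they generate are not
contained in `J`; their intersection is `0`, since after clearing denominators a nonzero Laurent
polynomial would be a polynomial divisible by polynomials prime to `T` of unbounded degree.
-/

open Polynomial LaurentPolynomial

namespace Polynomial

variable {K : Type*} [Field K]

theorem dvd_of_toLaurent_dvd {p q : K[X]} (hq : ¬ X ∣ q) (h : toLaurent q ∣ toLaurent p) :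
    q ∣ p := by
  obtain ⟨y, hy⟩ := h
  obtain ⟨N, r, hr⟩ := y.exists_T_pow
  have hpN : p * X ^ N = q * r := by
    apply toLaurent_injective
    rw [map_mul, map_mul, toLaurent_X_pow, hr, hy, mul_assoc]
  have hcop : IsCoprime q (X ^ N) :=
    (irreducible_X.coprime_iff_not_dvd.mpr hq).symm.pow_right
  exact hcop.dvd_of_dvd_mul_right ⟨r, hpN⟩

theorem not_X_dvd_mul_X_pow_add_one {R : Type*} [Semiring R] [Nontrivial R] (g : R[X]) (m : ℕ) :
    ¬ X ∣ g * X ^ (m + 1) + 1 := by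
  rw [X_dvd_iff, coeff_add, coeff_mul_X_pow', coeff_one]
  simp

theorem natDegree_mul_X_pow_add_one {R : Type*} [Semiring R] [Nontrivial R] {g : R[X]}
    (hg : g ≠ 0) (m : ℕ) :
    (g * X ^ (m + 1) + 1).natDegree = g.natDegree + (m + 1) := by
  rw [natDegree_add_eq_left_of_natDegree_lt] <;> simp [hg]

end Polynomial

namespace LaurentPolynomial

variable {K : Type*} [Field K]

theorem ne_zero_of_toLaurent_eq_mul_T {R : Type*} [Semiring R] {p : R[X]} {x : R[T;T⁻¹]}
    {N : ℤ} (hp : toLaurent p = x * T N) (hx : x ≠ 0) : p ≠ 0 := by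
  rintro rfl
  rw [map_zero, eq_comm, (isUnit_T _).mul_left_eq_zero] at hp
  exact hx hp

theorem iInf_span_toLaurent_eq_bot {q : ℕ → K[X]} (hX : ∀ m, ¬ X ∣ q m)
    (hdeg : ∀ d, ∃ m, d < (q m).natDegree) :
    ⨅ m, Ideal.span {toLaurent (q m)} = ⊥ := by
  refine eq_bot_iff.mpr fun x hx => ?_
  simp only [Submodule.mem_iInf, Ideal.mem_span_singleton] at hx
  rw [Ideal.mem_bot]
  by_contra hx0
  obtain ⟨N, p, hp⟩ := x.exists_T_pow
  obtain ⟨m, hm⟩ := hdeg p.natDegree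
  have hqp : q m ∣ p := dvd_of_toLaurent_dvd (hX m) (hp ▸ (hx m).mul_right _)
  exact (natDegree_le_of_dvd hqp (ne_zero_of_toLaurent_eq_mul_T hp hx0)).not_gt hm

theorem exists_forall_toLaurent_notMem {J : Ideal K[T;T⁻¹]} (hJ : J ≠ ⊤) :
    ∃ g : K[X], g ≠ 0 ∧ ∀ m, toLaurent (g * X ^ (m + 1) + 1) ∉ J := by
  by_cases hJ0 : J = ⊥
  · subst hJ0
    refine ⟨1, one_ne_zero, fun m hm => ?_⟩
    rw [Ideal.mem_bot, toLaurent_eq_zero] at hm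
    exact not_X_dvd_mul_X_pow_add_one 1 m (hm ▸ dvd_zero X)
  obtain ⟨f, hfJ, hf0⟩ := Submodule.exists_mem_ne_zero_of_ne_bot hJ0
  obtain ⟨N, g, hg⟩ := f.exists_T_pow
  refine ⟨g, ne_zero_of_toLaurent_eq_mul_T hg hf0, fun m hm => hJ ?_⟩
  rw [map_add, map_mul, toLaurent_X_pow, toLaurent_one, hg, mul_T_assoc] at hm
  exact (Ideal.eq_top_iff_one J).mpr ((J.add_mem_iff_right (J.mul_mem_right _ hfJ)).mp hm)

theorem exists_iInf_le_forall_not_le {J : Ideal K[T;T⁻¹]} (hJ : J ≠ ⊤) :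
    ∃ A : ℕ → Ideal K[T;T⁻¹], ⨅ m, A m ≤ J ∧ ∀ m, ¬ A m ≤ J := by
  obtain ⟨g, hg0, hg⟩ := exists_forall_toLaurent_notMem hJ
  refine ⟨fun m => Ideal.span {toLaurent (g * X ^ (m + 1) + 1)}, ?_, fun m => ?_⟩
  · rw [iInf_span_toLaurent_eq_bot (not_X_dvd_mul_X_pow_add_one g) fun d => ⟨d, ?_⟩]
    · exact bot_le
    · rw [natDegree_mul_X_pow_add_one hg0]
      omega
  · rw [Ideal.span_singleton_le_iff_mem]
    exact hg m

end LaurentPolynomial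

/-- No proper two-sided ideal of the matrix ring `Mₙ(K[T,T⁻¹])` (with `n ≥ 1`)
is strongly prime: every proper two-sided ideal `I` admits a sequence of
two-sided ideals whose intersection lies in `I` while no member does. -/
theorem stmt_5 {K : Type*} [Field K] (n : ℕ) (hn : 1 ≤ n)
    (I : TwoSidedIdeal (Matrix (Fin n) (Fin n) (LaurentPolynomial K)))
    (hI : I ≠ ⊤) :
    ∃ A : ℕ → TwoSidedIdeal (Matrix (Fin n) (Fin n) (LaurentPolynomial K)),
      (⨅ m, A m) ≤ I ∧ ∀ m, ¬ A m ≤ I := by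
  have : NeZero n := ⟨by omega⟩
  let e : Ideal K[T;T⁻¹] ≃o TwoSidedIdeal (Matrix (Fin n) (Fin n) K[T;T⁻¹]) :=
    TwoSidedIdeal.orderIsoIdeal.symm.trans TwoSidedIdeal.orderIsoMatrix
  obtain ⟨A, hA, hAI⟩ := exists_iInf_le_forall_not_le (J := e.symm I) (by simpa using hI)
  refine ⟨fun m => e (A m), ?_, fun m => ?_⟩
  · rw [← e.map_iInf]
    exact e.le_symm_apply.mp hA
  · rw [← e.le_symm_apply]
    exact hAI m
end

section
/- Let K be a field and n ≥ 1 an integer. Then the matrix ring M_n(K[T,T⁻¹]) is right insulated prime: for every nonzero matrix A ∈ M_n(K[T,T⁻¹]) there exists a finite subset S of M_n(K[T,T⁻¹]) such that the only matrix N ∈ M_n(K[T,T⁻¹]) satisfying A·C·N = 0 for all C ∈ S is N = 0. -/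
/-- The matrix ring `Mₙ(K[T,T⁻¹])` with `n ≥ 1` is right insulated prime:
every nonzero matrix has a right insulator. -/
theorem stmt_6 {K : Type*} [Field K] (n : ℕ) (hn : 1 ≤ n)
    (A : Matrix (Fin n) (Fin n) (LaurentPolynomial K)) (hA : A ≠ 0) :
    ∃ S : Finset (Matrix (Fin n) (Fin n) (LaurentPolynomial K)),
      ∀ N : Matrix (Fin n) (Fin n) (LaurentPolynomial K),
        (∀ C ∈ S, A * C * N = 0) → N = 0 := by
  classical
  obtain ⟨k, i, hki⟩ : ∃ k i, A k i ≠ 0 := by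
    by_contra h
    push_neg at h
    exact hA (Matrix.ext h)
  refine ⟨Finset.univ.image (fun p : Fin n × Fin n =>
    Matrix.single p.1 p.2 (1 : LaurentPolynomial K)), fun N hN => ?_⟩
  refine Matrix.ext fun j l => ?_
  have h := hN (Matrix.single i j 1)
    (Finset.mem_image.mpr ⟨(i, j), Finset.mem_univ _, rfl⟩)
  have := congrArg (fun M => M k l) h
  simp only [Matrix.mul_apply, Matrix.single, Matrix.of_apply, Matrix.zero_apply, ite_and,
    mul_ite, mul_one, mul_zero, ite_mul, zero_mul, Finset.sum_ite_eq, Finset.sum_ite_eq',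
    Finset.mem_univ, if_true] at this
  exact (mul_eq_zero.mp this).resolve_left hki
end

section
/- Let R be a principal ideal domain and I a proper ideal of R. The following are equivalent: (1) I is strongly irreducible; (2) I is irreducible; (3) I = Pⁿ for some prime ideal P of R and some integer n ≥ 1. -/
/-!
In a Dedekind domain (in particular a PID) the ideals form a unique factorisation monoid in which
`A ⊓ B = lcm A B` and `A ≤ B ↔ B ∣ A`. A prime power dividing an lcm divides one of the two
arguments, so prime powers are strongly irreducible. Conversely, a nonzero proper ideal factors as
`I = Pⁿ * J` with `P` a maximal ideal not containing `J`; then `Pⁿ` and `J` are coprime, so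
`I = Pⁿ ⊓ J`, and irreducibility forces `I = Pⁿ`.
-/

theorem Prime.pow_dvd_or_pow_dvd_of_pow_dvd_lcm {α : Type*} [CommMonoidWithZero α]
    [GCDMonoid α] {p a b : α} (hp : Prime p) (n : ℕ) (h : p ^ n ∣ lcm a b) :
    p ^ n ∣ a ∨ p ^ n ∣ b := by
  obtain ⟨a', b', ha, hb, hunit⟩ := extract_gcd a b
  generalize gcd a b = d at ha hb
  -- `a * b' = b * a'` is a common multiple of `a` and `b`, and `p` misses one of `a'`, `b'`.
  have lcm_dvd_left : lcm a b ∣ a * b' :=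
    lcm_dvd (dvd_mul_right a b') ⟨a', by rw [ha, hb, mul_right_comm]⟩
  have lcm_dvd_right : lcm a b ∣ b * a' :=
    lcm_dvd ⟨b', by rw [ha, hb, mul_right_comm]⟩ (dvd_mul_right b a')
  have not_dvd_both : ¬(p ∣ a' ∧ p ∣ b') := fun ⟨hpa, hpb⟩ =>
    hp.not_isUnit (isUnit_of_dvd_unit (dvd_gcd hpa hpb) hunit)
  rcases not_and_or.1 not_dvd_both with hpa | hpb
  · exact .inr (hp.pow_dvd_of_dvd_mul_right n hpa (h.trans lcm_dvd_right))
  · exact .inl (hp.pow_dvd_of_dvd_mul_right n hpb (h.trans lcm_dvd_left))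

namespace Ideal

variable {R : Type*} [CommRing R]

theorem IsPrime.infPrime {P : Ideal R} (hP : P.IsPrime) : InfPrime P :=
  ⟨not_isMax_iff_ne_top.2 hP.ne_top, fun _ _ => hP.inf_le.1⟩

variable [IsDedekindDomain R]

theorem infPrime_pow_of_isPrime {P : Ideal R} (hP : P.IsPrime) {n : ℕ} (hn : n ≠ 0) :
    InfPrime (P ^ n) := by
  rcases eq_or_ne P ⊥ with rfl | hP0
  · rw [← zero_eq_bot, zero_pow hn]
    exact hP.infPrime
  refine ⟨not_isMax_iff_ne_top.2 (ne_top_of_le_ne_top hP.ne_top (pow_le_self hn)),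
    fun A B h => ?_⟩
  rw [← lcm_eq_inf, ← dvd_iff_le] at h
  simpa only [← dvd_iff_le] using (prime_of_isPrime hP0 hP).pow_dvd_or_pow_dvd_of_pow_dvd_lcm n h

theorem exists_isPrime_pow_of_infIrred {I : Ideal R} (hI : InfIrred I) :
    ∃ (P : Ideal R) (n : ℕ), P.IsPrime ∧ 1 ≤ n ∧ I = P ^ n := by
  rcases eq_or_ne I ⊥ with rfl | hI0
  · exact ⟨⊥, 1, isPrime_bot, le_rfl, (pow_one _).symm⟩
  obtain ⟨P, hP, hPI⟩ :=
    WfDvdMonoid.exists_irreducible_factor (isUnit_iff.not.2 hI.ne_top) hI0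
  replace hP : Prime P := UniqueFactorizationMonoid.irreducible_iff_prime.1 hP
  obtain ⟨J, hIJ, hPJ⟩ :=
    (FiniteMultiplicity.of_not_isUnit hP.not_isUnit hI0).exists_eq_pow_mul_and_not_dvd
  set n := multiplicity P I
  have hPmax : P.IsMaximal := (isPrime_of_prime hP).isMaximal hP.ne_zero
  have hPJ_top : P ⊔ J = ⊤ := hPmax.out.2 _ (left_lt_sup.2 (hPJ ∘ dvd_iff_le.2))
  have hI_inf : P ^ n ⊓ J = I := hIJ ▸ (mul_eq_inf_of_coprime (pow_sup_eq_top hPJ_top)).symm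
  rcases hI.2 hI_inf with hPn | hJ
  · refine ⟨P, n, isPrime_of_prime hP, Nat.one_le_iff_ne_zero.2 fun hn => hI.ne_top ?_, hPn.symm⟩
    rw [← hPn, hn, pow_zero, one_eq_top]
  · exact absurd (hJ ▸ hPI) hPJ

theorem infIrred_iff_exists_isPrime_pow {I : Ideal R} :
    InfIrred I ↔ ∃ (P : Ideal R) (n : ℕ), P.IsPrime ∧ 1 ≤ n ∧ I = P ^ n :=
  ⟨exists_isPrime_pow_of_infIrred, fun ⟨_, _, hP, hn, hIP⟩ =>
    hIP ▸ (infPrime_pow_of_isPrime hP (Nat.one_le_iff_ne_zero.1 hn)).infIrred⟩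

theorem infPrime_iff_infIrred {I : Ideal R} : InfPrime I ↔ InfIrred I := by
  refine ⟨InfPrime.infIrred, fun hI => ?_⟩
  obtain ⟨P, n, hP, hn, rfl⟩ := exists_isPrime_pow_of_infIrred hI
  exact infPrime_pow_of_isPrime hP (Nat.one_le_iff_ne_zero.1 hn)

end Ideal

/-- For a proper ideal `I` of a principal ideal domain the following are
equivalent: (1) `I` is strongly irreducible; (2) `I` is irreducible;
(3) `I` is a power `Pⁿ` (with `n ≥ 1`) of a prime ideal `P`. -/
theorem stmt_9 {R : Type*} [CommRing R] [IsDomain R] [IsPrincipalIdealRing R]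
    (I : Ideal R) (hI : I ≠ ⊤) :
    ((∀ A B : Ideal R, A ⊓ B ≤ I → A ≤ I ∨ B ≤ I) ↔
      (∀ A B : Ideal R, A ⊓ B = I → A = I ∨ B = I)) ∧
    ((∀ A B : Ideal R, A ⊓ B = I → A = I ∨ B = I) ↔
      (∃ (P : Ideal R) (n : ℕ), P.IsPrime ∧ 1 ≤ n ∧ I = P ^ n)) := by
  have hI' : ¬IsMax I := not_isMax_iff_ne_top.2 hI
  have strong_iff : (∀ A B : Ideal R, A ⊓ B ≤ I → A ≤ I ∨ B ≤ I) ↔ InfPrime I :=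
    (and_iff_right hI').symm
  have irred_iff : (∀ A B : Ideal R, A ⊓ B = I → A = I ∨ B = I) ↔ InfIrred I :=
    (and_iff_right hI').symm
  rw [strong_iff, irred_iff]
  exact ⟨Ideal.infPrime_iff_infIrred, Ideal.infIrred_iff_exists_isPrime_pow⟩
end

section
/- Let R be a commutative ring in which every proper ideal is a prime ideal. Then the ideals of R form a chain under set inclusion: for all ideals A, B of R, A ⊆ B or B ⊆ A. -/
/-- If every proper ideal of a commutative ring is prime, then the ideals form
a chain under inclusion. -/
theorem stmt_14 {R : Type*} [CommRing R]
    (h : ∀ I : Ideal R, I ≠ ⊤ → I.IsPrime) :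
    ∀ A B : Ideal R, A ≤ B ∨ B ≤ A := by
  intro A B
  by_cases hI : A ⊓ B = ⊤
  · left
    have : A = ⊤ := top_le_iff.mp (le_trans (le_of_eq hI.symm) inf_le_left)
    have hB : B = ⊤ := top_le_iff.mp (le_trans (le_of_eq hI.symm) inf_le_right)
    rw [this, hB]
  · have hp := h (A ⊓ B) hI
    have : A * B ≤ A ⊓ B := Ideal.mul_le_inf
    rcases (Ideal.IsPrime.mul_le hp).mp this with h1 | h1
    · left; exact le_trans h1 inf_le_right
    · right; exact le_trans h1 inf_le_left
end

section
/- Let R be a principal ideal domain and P a nonzero prime ideal of R. Then P² is not an intersection of prime ideals: for every set S of prime ideals of R, the infimum of S is not equal to P² (while P² is, trivially, a product of prime ideals). -/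
/-!
An intersection of prime ideals is a radical ideal, and the radical of `P ^ 2` is `P`; so if `P ^ 2`
were such an intersection, it would equal `P`. But a finitely generated idempotent ideal of a domain
is `⊥` or `⊤`, which a nonzero prime ideal is not.
-/

namespace Ideal

theorem isRadical_sInf_of_isPrime {R : Type*} [CommRing R] {S : Set (Ideal R)}
    (hS : ∀ Q ∈ S, Q.IsPrime) : (sInf S).IsRadical := by
  rw [sInf_eq_iInf']
  exact isRadical_iInf _ fun Q => (hS Q Q.2).isRadical

theorem IsPrime.pow_eq_self_of_isRadical {R : Type*} [CommRing R] {P : Ideal R} (hP : P.IsPrime)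
    {n : ℕ} (hn : n ≠ 0) (hrad : (P ^ n).IsRadical) : P ^ n = P := by
  rw [← hrad.radical, radical_pow P hn, hP.radical]

theorem IsPrime.not_isRadical_sq {R : Type*} [CommRing R] [IsDomain R] [IsNoetherianRing R]
    {P : Ideal R} (hP : P.IsPrime) (hP0 : P ≠ ⊥) : ¬(P ^ 2).IsRadical := by
  intro hrad
  have hidem : IsIdempotentElem P := by
    rw [IsIdempotentElem, ← sq]
    exact hP.pow_eq_self_of_isRadical two_ne_zero hrad
  rcases (isIdempotentElem_iff_eq_bot_or_top P (IsNoetherian.noetherian P)).mp hidem with h | h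
  · exact hP0 h
  · exact hP.ne_top h

end Ideal

/-- In a principal ideal domain, the square of a nonzero prime ideal is not
an intersection of prime ideals. -/
theorem stmt_16 {R : Type*} [CommRing R] [IsDomain R] [IsPrincipalIdealRing R]
    (P : Ideal R) (hP : P.IsPrime) (hP0 : P ≠ ⊥) :
    ∀ S : Set (Ideal R), (∀ Q ∈ S, Q.IsPrime) → sInf S ≠ P ^ 2 := by
  intro S hS hSP
  exact hP.not_isRadical_sq hP0 (hSP ▸ Ideal.isRadical_sInf_of_isPrime hS)
end
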